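/- Let X₁, …, X_N be pairwise distinct nonempty positive words over the alphabet {a, b}, each of which is 6-aperiodic and begins and ends with the letter b. Then the concatenated word a⁶X₁a⁶X₂⋯a⁶X_N is 7-aperiodic. -/

import Mathlib

namespace Olshanskii

/-- A word over the alphabet `{a, b, a⁻¹, b⁻¹}`: each letter is a pair
(letter, sign) with `false = a`, `true = b`; the sign `true` means the positive letter. -/
abbrev Word : Type := List (Bool × Bool)

/-- The formal inverse of a word. -/
def winv (w : Word) : Word := (w.map (fun p => (p.1, !p.2))).reverse

/-- A positive word uses only the letters `a` and `b`. -/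
def Positive (w : Word) : Prop := ∀ p ∈ w, p.2 = true

/-- The `s`-th power of a word (concatenation of `s` copies). -/
def wpow (y : Word) (s : ℕ) : Word := (List.replicate s y).flatten

/-- A word is `s`-aperiodic if it contains no nonempty subword of the form `Yˢ`. -/
def Aperiodic (s : ℕ) (w : Word) : Prop := ∀ y : Word, y ≠ [] → ¬ (wpow y s <:+: w)

/-- `V` occurs in `W` only once as a subword. -/
def OccursOnce (v w : Word) : Prop :=
  ∀ w₁ w₂ w₁' w₂' : Word, w = w₁ ++ v ++ w₂ → w = w₁' ++ v ++ w₂' → w₁ = w₁'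

/-- Condition (*) with parameter `lam`: any subword `V` of `W ∈ 𝒳` with `|V| ≥ lam * |W|`
occurs in `W` only once, and determines `W` inside `𝒳`. -/
def CondStar (lam : ℝ) (𝒳 : Set Word) : Prop :=
  ∀ W ∈ 𝒳, ∀ V : Word, V <:+: W → lam * (W.length : ℝ) ≤ (V.length : ℝ) →
    OccursOnce V W ∧ ∀ U ∈ 𝒳, V <:+: U → U = W

/-- Condition (**): every word of the set is 7-aperiodic. -/
def CondStarStar (𝒳 : Set Word) : Prop := ∀ W ∈ 𝒳, Aperiodic 7 W

/-- The free group `F` on the two generators `a` and `b`. -/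
abbrev F : Type := FreeGroup Bool

/-- The subgroup `M` of `F` generated by the elements represented by the words of `𝒳`. -/
def M (𝒳 : Set Word) : Subgroup F := Subgroup.closure (FreeGroup.mk '' 𝒳)

/-- The normal closure `L` of `N` in `F`. -/
def L (N : Subgroup F) : Subgroup F := Subgroup.normalClosure (N : Set F)

instance (N : Subgroup F) : (L N).Normal := Subgroup.normalClosure_normal

/-- The quotient group `H = F / L`. -/
abbrev H (N : Subgroup F) : Type := F ⧸ L N

/-- The natural projection `F → H`. -/
def pr (N : Subgroup F) : F →* H N := QuotientGroup.mk' (L N)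

/-- The image `Ḡ` of `M` in `H`. -/
def Gbar (𝒳 : Set Word) (N : Subgroup F) : Subgroup (H N) := (M 𝒳).map (pr N)

/-- Word length of `g` with respect to a generating set `S` (and the inverses of `S`). -/
noncomputable def wordLength {G : Type*} [Group G] (S : Set G) (g : G) : ℕ :=
  sInf {n | ∃ l : List G, l.length = n ∧ (∀ x ∈ l, x ∈ S ∨ x⁻¹ ∈ S) ∧ l.prod = g}

/-- Word length in `H` with respect to the images of `a` and `b`. -/
noncomputable def normH {N : Subgroup F} (h : H N) : ℕ :=
  wordLength {pr N (FreeGroup.of false), pr N (FreeGroup.of true)} h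

/-- An element of `H` is free if it is not conjugate in `H` to any element of `Ḡ`. -/
def FreeElt (𝒳 : Set Word) (N : Subgroup F) (g : H N) : Prop :=
  ¬ ∃ x ∈ Gbar 𝒳 N, IsConj g x

/-- A word `A` is minimal if it represents a free element of `H` that is not conjugate
in `H` to any element `h` with `|h| < |A|`. -/
def Minimal (𝒳 : Set Word) (N : Subgroup F) (A : Word) : Prop :=
  FreeElt 𝒳 N (pr N (FreeGroup.mk A)) ∧
    ∀ h : H N, IsConj (pr N (FreeGroup.mk A)) h → A.length ≤ normH h

/-- `W` is `A`-periodic: `W` is a subword of `Aᵗ` for some `t > 0`. -/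
def APeriodic (A W : Word) : Prop := ∃ t : ℕ, 0 < t ∧ W <:+: wpow A t

/-- A word is cyclically reduced iff its double is a reduced word. -/
def CyclicallyReduced (w : Word) : Prop := FreeGroup.reduce (w ++ w) = w ++ w

/-- The elementary closure `E(g)` of a free element `g` of `H`, as a set. -/
def Eset (N : Subgroup F) (g : H N) : Set (H N) :=
  {x | ∃ t : ℤ, t ≠ 0 ∧ (x * g ^ t * x⁻¹ = g ^ t ∨ x * g ^ t * x⁻¹ = g ^ (-t))}

/-- The subgroup `E⁺(g)` of a free element `g` of `H`, as a set. -/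
def EplusSet (N : Subgroup F) (g : H N) : Set (H N) :=
  {x | ∃ t : ℤ, t ≠ 0 ∧ x * g ^ t * x⁻¹ = g ^ t}

/-- A family `(g₁, …, gₙ)` of elements of `Ḡ` is reluctant if no proper subfamily admits
`y_j ∈ Ḡ` with `∏ y_j g_{i_j} y_j⁻¹ = 1`. -/
def Reluctant (𝒳 : Set Word) (N : Subgroup F) {n : ℕ} (g : Fin n → H N) : Prop :=
  ¬ ∃ (m : ℕ) (_ : 1 ≤ m) (_ : m ≤ n - 1) (ι : Fin m → Fin n), StrictMono ι ∧
    ∃ y : Fin m → H N, (∀ j, y j ∈ Gbar 𝒳 N) ∧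
      (List.ofFn (fun j => y j * g (ι j) * (y j)⁻¹)).prod = 1

/-- The standing hypotheses of Olshanskii's embedding construction. -/
structure Setup (𝒳 : Set Word) (N : Subgroup F) : Prop where
  pos : ∀ W ∈ 𝒳, Positive W
  star : CondStar 0.01 𝒳
  starstar : CondStarStar 𝒳
  le : N ≤ M 𝒳
  norm : ∀ m ∈ M 𝒳, ∀ x ∈ N, m * x * m⁻¹ ∈ N

end Olshanskii

namespace Olshanskii

abbrev aL : Bool × Bool := (false, true)
abbrev bL : Bool × Bool := (true, true)

lemma wpow_succ (y : Word) (s : ℕ) : wpow y (s+1) = y ++ wpow y s := by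
  simp [wpow, List.replicate_succ]

lemma wpow_length (y : Word) (s : ℕ) : (wpow y s).length = s * y.length := by
  induction s with
  | zero => simp [wpow]
  | succ s ih => rw [wpow_succ, List.length_append, ih]; ring

lemma wpow_getElem? (y : Word) (s k : ℕ) (hk : k < s * y.length) :
    (wpow y s)[k]? = y[k % y.length]? := by
  induction s generalizing k with
  | zero => omega
  | succ s ih =>
    rw [wpow_succ]
    by_cases h : k < y.length
    · rw [List.getElem?_append_left h, Nat.mod_eq_of_lt h]
    · push_neg at h
      rw [List.getElem?_append_right h]
      rw [Nat.succ_mul] at hk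
      rw [ih _ (by omega), Nat.mod_eq_sub_mod h]

lemma mod_add_left (m k p : ℕ) : (m % p + k) % p = (m + k) % p := by
  rw [Nat.add_mod (m % p), Nat.mod_mod_of_dvd m (dvd_refl p), ← Nat.add_mod]

lemma exists_shift (p m k₀ : ℕ) (hp0 : 0 < p) (hk : k₀ < p) :
    ∃ k, k < p ∧ (m + k) % p = k₀ := by
  refine ⟨(p + k₀ - m % p) % p, Nat.mod_lt _ hp0, ?_⟩
  have hr : m % p < p := Nat.mod_lt _ hp0
  rw [Nat.add_mod m, Nat.mod_mod_of_dvd _ (dvd_refl p), ← Nat.add_mod]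
  rw [show m + (p + k₀ - m % p) = p * (m / p) + (p + k₀) from by
    have h1 : m % p + p * (m / p) = m := Nat.mod_add_div m p
    omega]
  rw [Nat.mul_add_mod, Nat.add_mod_left, Nat.mod_eq_of_lt hk]

section
variable (n : ℕ) (X : Fin n → Word)

def blks : List Word := List.ofFn (fun i => List.replicate 6 aL ++ X i)

def Wd : Word := (blks n X).flatten

def off (i : ℕ) : ℕ := (((blks n X).take i).flatten).length

lemma blks_length : (blks n X).length = n := List.length_ofFn

lemma off_zero : off n X 0 = 0 := rfl

lemma off_succ (i : ℕ) (hi : i < n) :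
    off n X (i+1) = off n X i + (6 + (X ⟨i, hi⟩).length) := by
  unfold off
  have hlen : i < (blks n X).length := by rw [blks_length]; exact hi
  rw [List.take_succ, List.getElem?_eq_getElem hlen]
  simp [blks, List.flatten_append, List.getElem_ofFn]
  omega

lemma off_le_succ (i : ℕ) : off n X i ≤ off n X (i+1) := by
  unfold off
  rw [List.take_succ, List.flatten_append, List.length_append]
  omega

lemma off_mono : Monotone (off n X) := monotone_nat_of_le_succ (off_le_succ n X)

lemma off_lt_of_lt (i j : ℕ) (h : off n X i < off n X j) : i < j := by
  by_contra h'
  push_neg at h'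
  exact absurd (off_mono n X h') (not_le.2 h)

lemma Wd_length : (Wd n X).length = off n X n := by
  unfold Wd off
  rw [List.take_of_length_le (le_of_eq (blks_length n X))]

lemma Wd_get (i : ℕ) (hi : i < n) (j : ℕ) (hj : j < 6 + (X ⟨i, hi⟩).length) :
    (Wd n X)[off n X i + j]? = (List.replicate 6 aL ++ X ⟨i, hi⟩)[j]? := by
  have hlen : i < (blks n X).length := by rw [blks_length]; exact hi
  have hoff : (((blks n X).take i).flatten).length = off n X i := rfl
  conv_lhs => rw [Wd, ← List.take_append_drop i (blks n X), List.flatten_append]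
  rw [List.getElem?_append_right (by rw [hoff]; omega)]
  rw [hoff, Nat.add_sub_cancel_left]
  rw [List.drop_eq_getElem_cons hlen, List.flatten_cons]
  have : (blks n X)[i] = List.replicate 6 aL ++ X ⟨i, hi⟩ := by
    simp [blks, List.getElem_ofFn]
  rw [this, List.getElem?_append_left (by rw [List.length_append, List.length_replicate]; omega)]

lemma blk_sep (w : Word) (j : ℕ) (hj : j < 6) :
    (List.replicate 6 aL ++ w)[j]? = some aL := by
  rw [List.getElem?_append_left (by simpa using hj), List.getElem?_replicate, if_pos hj]

lemma blk_X (w : Word) (j : ℕ) :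
    (List.replicate 6 aL ++ w)[6 + j]? = w[j]? := by
  rw [List.getElem?_append_right (by simp)]
  simp

lemma decomp (t : ℕ) (ht : t < off n X n) :
    ∃ i, ∃ hi : i < n, off n X i ≤ t ∧ t < off n X (i+1) := by
  suffices h : ∀ m, m ≤ n → t < off n X m →
      ∃ i, ∃ hi : i < n, off n X i ≤ t ∧ t < off n X (i+1) from h n le_rfl ht
  intro m
  induction m with
  | zero => intro _ h0; rw [off_zero] at h0; omega
  | succ m ih =>
    intro hm h
    by_cases h' : t < off n X m
    · exact ih (by omega) h'
    · exact ⟨m, by omega, by omega, h⟩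

lemma a6_sep (i : ℕ) (hi : i < n) (k : ℕ) (hk : k < 6) :
    (Wd n X)[off n X i + k]? = some aL := by
  rw [Wd_get n X i hi k (by omega), blk_sep _ _ hk]

lemma Wd_letters (hpos : ∀ i, Positive (X i)) (t : ℕ) (ht : t < off n X n) :
    (Wd n X)[t]? = some aL ∨ (Wd n X)[t]? = some bL := by
  obtain ⟨i, hi, h1, h2⟩ := decomp n X t ht
  have hoff := off_succ n X i hi
  have hblen : t - off n X i < 6 + (X ⟨i, hi⟩).length := by omega
  have hW := Wd_get n X i hi (t - off n X i) hblen
  rw [show off n X i + (t - off n X i) = t from by omega] at hW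
  by_cases hj : t - off n X i < 6
  · left; rw [hW]; exact blk_sep _ _ hj
  · have hc : t - off n X i = 6 + (t - off n X i - 6) := by omega
    rw [hc, blk_X] at hW
    have hcl : t - off n X i - 6 < (X ⟨i, hi⟩).length := by omega
    have hsome : (Wd n X)[t]? = some ((X ⟨i, hi⟩)[t - off n X i - 6]'hcl) := by
      rw [hW]; exact List.getElem?_eq_getElem hcl
    have hp2 : ((X ⟨i, hi⟩)[t - off n X i - 6]'hcl).2 = true :=
      hpos ⟨i, hi⟩ _ (List.getElem_mem hcl)
    rcases hx : (X ⟨i, hi⟩)[t - off n X i - 6]'hcl with ⟨b1, b2⟩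
    rw [hx] at hsome hp2
    simp only at hp2
    subst hp2
    cases b1
    · left; exact hsome
    · right; exact hsome

lemma a6_at (hap : ∀ i, Aperiodic 6 (X i))
    (hhead : ∀ i, (X i).head? = some bL)
    (hlast : ∀ i, (X i).getLast? = some bL)
    (t : ℕ) (ht : t + 6 ≤ off n X n)
    (ha : ∀ k, k < 6 → (Wd n X)[t + k]? = some aL) :
    ∃ i, ∃ hi : i < n, t = off n X i := by
  obtain ⟨i, hi, h1, h2⟩ := decomp n X t (by omega)
  refine ⟨i, hi, ?_⟩
  have hoff := off_succ n X i hi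
  by_contra hne
  have hj0 : 0 < t - off n X i := by omega
  have hXpos : 0 < (X ⟨i, hi⟩).length := by
    rcases Nat.eq_zero_or_pos (X ⟨i, hi⟩).length with h0 | h0
    · have := hhead ⟨i, hi⟩
      rw [List.eq_nil_of_length_eq_zero h0] at this
      simp at this
    · exact h0
  by_cases hj6 : t - off n X i < 6
  · -- the head b of X i lies in [t, t+6)
    have h6 : (Wd n X)[off n X i + 6]? = some bL := by
      have := Wd_get n X i hi 6 (by omega)
      rw [this, show (6 : ℕ) = 6 + 0 from rfl, blk_X, ← List.head?_eq_getElem?]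
      exact hhead ⟨i, hi⟩
    rw [show off n X i + 6 = t + (6 - (t - off n X i)) from by omega] at h6
    rw [ha (6 - (t - off n X i)) (by omega)] at h6
    exact absurd h6 (by decide)
  · have hc : t = off n X i + (6 + (t - off n X i - 6)) := by omega
    by_cases hcc : (t - off n X i - 6) + 6 ≤ (X ⟨i, hi⟩).length
    · -- a⁶ inside X i, contradicting 6-aperiodicity
      have key : ∀ k, k < 6 → (X ⟨i, hi⟩)[t - off n X i - 6 + k]? = some aL := by
        intro k hk
        have e := ha k hk
        rw [show t + k = off n X i + (6 + (t - off n X i - 6 + k)) from by omega] at e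
        rw [Wd_get n X i hi _ (by omega), blk_X] at e
        exact e
      have heq : ((X ⟨i, hi⟩).drop (t - off n X i - 6)).take 6 = List.replicate 6 aL := by
        apply List.ext_getElem?
        intro m
        rw [List.getElem?_take, List.getElem?_replicate]
        by_cases hm : m < 6
        · rw [if_pos hm, if_pos hm, List.getElem?_drop]
          exact key m hm
        · rw [if_neg hm, if_neg hm]
      have hinf : wpow [aL] 6 <:+: X ⟨i, hi⟩ := by
        have hw : wpow [aL] 6 = List.replicate 6 aL := rfl
        rw [hw, ← heq]
        exact (List.take_prefix _ _).isInfix.trans (List.drop_suffix _ _).isInfix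
      exact hap ⟨i, hi⟩ [aL] (by simp) hinf
    · -- the last b of X i lies in [t, t+6)
      have hlast' : (X ⟨i, hi⟩)[(X ⟨i, hi⟩).length - 1]? = some bL := by
        rw [← List.getLast?_eq_getElem?]; exact hlast ⟨i, hi⟩
      have h6 : (Wd n X)[off n X i + (6 + ((X ⟨i, hi⟩).length - 1))]? = some bL := by
        rw [Wd_get n X i hi _ (by omega), blk_X]
        exact hlast'
      rw [show off n X i + (6 + ((X ⟨i, hi⟩).length - 1))
            = t + (off n X i + 6 + (X ⟨i, hi⟩).length - 1 - t) from by omega] at h6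
      rw [ha _ (by omega)] at h6
      exact absurd h6 (by decide)

end




/-- the concatenation `a⁶X₁a⁶X₂⋯a⁶X_N` of pairwise distinct nonempty
6-aperiodic positive words beginning and ending with `b` is 7-aperiodic. -/
theorem concatenation_seven_aperiodic (n : ℕ) (X : Fin n → Word)
    (hpos : ∀ i, Positive (X i))
    (hne : ∀ i, X i ≠ [])
    (hinj : Function.Injective X)
    (hap : ∀ i, Aperiodic 6 (X i))
    (hhead : ∀ i, (X i).head? = some (true, true))
    (hlast : ∀ i, (X i).getLast? = some (true, true)) :
    Aperiodic 7
      ((List.ofFn (fun i => List.replicate 6 ((false, true) : Bool × Bool) ++ X i)).flatten) := by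
  intro Y hY hinf
  have huv' : wpow Y 7 <:+: Wd n X := hinf
  obtain ⟨u, v, huv⟩ := huv'
  rw [List.append_assoc] at huv
  set p := Y.length with hpdef
  have hp0 : 0 < p := List.length_pos_iff.2 hY
  set s := u.length with hsdef
  have hPlen : (wpow Y 7).length = 7 * p := wpow_length Y 7
  have hWlen : (Wd n X).length = off n X n := Wd_length n X
  have hsp : s + 7 * p ≤ off n X n := by
    have hlen := congrArg List.length huv
    rw [List.length_append, List.length_append, hPlen, hWlen] at hlen
    omega
  have hget : ∀ m, m < 7 * p → (Wd n X)[s + m]? = Y[m % p]? := by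
    intro m hm
    rw [← huv]
    rw [List.getElem?_append_right (show u.length ≤ s + m by omega)]
    rw [show s + m - u.length = m from by omega]
    rw [List.getElem?_append_left (show m < (wpow Y 7).length by rw [hPlen]; omega)]
    rw [hpdef]
    exact wpow_getElem? Y 7 m (by omega)
  have hper : ∀ d, d + p < 7 * p → (Wd n X)[s + d]? = (Wd n X)[s + (d + p)]? := by
    intro d hd
    rw [hget d (by omega), hget (d + p) hd, Nat.add_mod_right]
  by_cases hb : ∃ k, k < p ∧ Y[k]? = some bL
  · obtain ⟨k₀, hk₀, hbk⟩ := hb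
    by_cases ha6 : ∃ m, m + 6 ≤ 7 * p ∧ ∀ k, k < 6 → Y[(m + k) % p]? = some aL
    · -- Case A1 : a⁶ occurs inside the power
      obtain ⟨m, hm6, hma⟩ := ha6
      have hp7 : 7 ≤ p := by
        by_contra hple
        push_neg at hple
        obtain ⟨k, hk6, hkk⟩ := exists_shift p m k₀ hp0 hk₀
        have h := hma k (by omega)
        rw [hkk] at h
        exact absurd (hbk.symm.trans h) (by decide)
      have hJ : m % p < p := Nat.mod_lt _ hp0
      have hocc : ∀ t k : ℕ, t ≤ 5 → k < 6 → Y[(m % p + t * p + k) % p]? = some aL := by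
        intro t k ht hk
        have h1 : (m % p + t * p + k) % p = (m + k) % p := by
          rw [show m % p + t * p + k = m % p + k + t * p from by ring,
            Nat.add_mul_mod_self_right, mod_add_left]
        rw [h1]
        exact hma k hk
      have hblock : ∀ t : ℕ, t ≤ 2 → ∃ i, ∃ hi : i < n, s + (m % p + t * p) = off n X i := by
        intro t ht
        have htp : t * p ≤ 2 * p := Nat.mul_le_mul_right p ht
        apply a6_at n X hap hhead hlast _ (by omega)
        intro k hk
        rw [show s + (m % p + t * p) + k = s + (m % p + t * p + k) from by omega]
        rw [hget _ (by omega)]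
        exact hocc t k (by omega) hk
      obtain ⟨i₀, hi₀, e₀⟩ := hblock 0 (by omega)
      obtain ⟨i₁, hi₁, e₁⟩ := hblock 1 (by omega)
      obtain ⟨i₂, hi₂, e₂⟩ := hblock 2 (by omega)
      rw [Nat.zero_mul] at e₀
      rw [Nat.one_mul] at e₁
      have h01 : i₀ < i₁ := off_lt_of_lt n X _ _ (by omega)
      have h12 : i₁ < i₂ := off_lt_of_lt n X _ _ (by
        have h2p : 2 * p = p + p := by ring
        omega)
      have hm01 : off n X (i₀ + 1) ≤ off n X i₁ := off_mono n X (by omega)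
      have hm12 : off n X (i₁ + 1) ≤ off n X i₂ := off_mono n X (by omega)
      have hs₀ := off_succ n X i₀ hi₀
      have hs₁ := off_succ n X i₁ hi₁
      set L₀ := (X ⟨i₀, hi₀⟩).length with hL₀
      set L₁ := (X ⟨i₁, hi₁⟩).length with hL₁
      have hL₀p : 6 + L₀ ≤ p := by omega
      have hL₁p : 6 + L₁ ≤ p := by
        have h2p : 2 * p = p + p := by ring
        omega
      -- no a⁶ occurrence strictly inside a block
      have hinside : ∀ t, t + 6 ≤ off n X n → (∀ k, k < 6 → (Wd n X)[t + k]? = some aL) →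
          ∀ i, ∀ hi : i < n, ¬ (off n X i < t ∧ t < off n X (i + 1)) := by
        rintro t h6 ha i hi ⟨hlt, hlt2⟩
        obtain ⟨i₃, hi₃, he⟩ := a6_at n X hap hhead hlast t h6 ha
        have hlt' : i < i₃ := off_lt_of_lt n X _ _ (by omega)
        have := off_mono n X (show i + 1 ≤ i₃ from hlt')
        omega
      have hLeq : L₀ = L₁ := by
        rcases Nat.lt_trichotomy L₀ L₁ with hL | hL | hL
        · -- a⁶ at off (i₀+1) transfers forward into the interior of block i₁
          exfalso
          apply hinside (off n X i₁ + (6 + L₀)) (by omega) ?_ i₁ hi₁ (by omega)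
          intro k hk
          have e := hper (m % p + (6 + L₀ + k)) (by omega)
          rw [show s + (m % p + (6 + L₀ + k)) = off n X (i₀ + 1) + k from by omega] at e
          rw [show s + (m % p + (6 + L₀ + k) + p) = off n X i₁ + (6 + L₀) + k from by omega] at e
          rw [← e]
          exact a6_sep n X (i₀ + 1) (by omega) k hk
        · exact hL
        · -- a⁶ at off (i₁+1) transfers backward into the interior of block i₀
          exfalso
          apply hinside (off n X i₀ + (6 + L₁)) (by omega) ?_ i₀ hi₀ (by omega)
          intro k hk
          have e := hper (m % p + (6 + L₁ + k)) (by omega)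
          rw [show s + (m % p + (6 + L₁ + k)) = off n X i₀ + (6 + L₁) + k from by omega] at e
          rw [show s + (m % p + (6 + L₁ + k) + p) = off n X (i₁ + 1) + k from by omega] at e
          rw [e]
          exact a6_sep n X (i₁ + 1) (by omega) k hk
      have hXeq : X ⟨i₀, hi₀⟩ = X ⟨i₁, hi₁⟩ := by
        apply List.ext_getElem?
        intro c
        by_cases hc : c < L₀
        · have e1 : (Wd n X)[off n X i₀ + (6 + c)]? = (X ⟨i₀, hi₀⟩)[c]? := by
            rw [Wd_get n X i₀ hi₀ (6 + c) (by omega), blk_X]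
          have e2 : (Wd n X)[off n X i₁ + (6 + c)]? = (X ⟨i₁, hi₁⟩)[c]? := by
            rw [Wd_get n X i₁ hi₁ (6 + c) (by omega), blk_X]
          rw [← e1, ← e2]
          have e := hper (m % p + (6 + c)) (by omega)
          rw [show s + (m % p + (6 + c)) = off n X i₀ + (6 + c) from by omega] at e
          rw [show s + (m % p + (6 + c) + p) = off n X i₁ + (6 + c) from by omega] at e
          exact e
        · rw [List.getElem?_eq_none (by omega), List.getElem?_eq_none (by omega)]
      have : (⟨i₀, hi₀⟩ : Fin n) = ⟨i₁, hi₁⟩ := hinj hXeq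
      rw [Fin.mk.injEq] at this
      omega
    · -- Case A2 : no a⁶ occurrence; the power sits inside a single X i
      have hbpos : ∀ t : ℕ, t ≤ 6 → (Wd n X)[s + (k₀ + t * p)]? = some bL := by
        intro t ht
        have htp : t * p ≤ 6 * p := Nat.mul_le_mul_right p ht
        rw [hget _ (by omega), Nat.add_mul_mod_self_right, Nat.mod_eq_of_lt hk₀]
        exact hbk
      -- decompositions of the b-positions
      have hdec : ∀ t : ℕ, t ≤ 6 → ∃ i, ∃ hi : i < n,
          off n X i + 6 ≤ s + (k₀ + t * p) ∧ s + (k₀ + t * p) < off n X (i + 1) := by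
        intro t ht
        have htp : t * p ≤ 6 * p := Nat.mul_le_mul_right p ht
        obtain ⟨i, hi, h1, h2⟩ := decomp n X (s + (k₀ + t * p)) (by omega)
        refine ⟨i, hi, ?_, h2⟩
        by_contra hlt
        push_neg at hlt
        have e := Wd_get n X i hi (s + (k₀ + t * p) - off n X i) (by
          have := off_succ n X i hi; omega)
        rw [show off n X i + (s + (k₀ + t * p) - off n X i) = s + (k₀ + t * p) from by omega] at e
        rw [blk_sep _ _ (by omega)] at e
        rw [hbpos t ht] at e
        exact absurd e (by decide)
      -- distinct blocks would give an a⁶ occurrence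
      have hsame : ∀ (q₁ q₂ i i' : ℕ), i < n → i' < n →
          s ≤ q₁ → q₂ < s + 7 * p →
          off n X i ≤ q₁ → q₁ < off n X (i + 1) →
          off n X i' + 6 ≤ q₂ → i < i' → False := by
        intro q₁ q₂ i i' hi hi' hq1 hq2 ho1 ho2 ho3 hii
        apply ha6
        have h1 : off n X (i + 1) ≤ off n X i' := off_mono n X (by omega)
        refine ⟨off n X i' - s, by omega, ?_⟩
        intro k hk
        have e := hget (off n X i' - s + k) (by omega)
        rw [show s + (off n X i' - s + k) = off n X i' + k from by omega] at e
        rw [a6_sep n X i' hi' k hk] at e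
        exact e.symm
      obtain ⟨i, hi, hb0, hb0'⟩ := hdec 0 (by omega)
      obtain ⟨i', hi', hb6, hb6'⟩ := hdec 6 (by omega)
      rw [Nat.zero_mul] at hb0 hb0'
      have h6p : 6 * p = p + p + p + p + p + p := by ring
      have hii' : i = i' := by
        rcases Nat.lt_trichotomy i i' with h | h | h
        · exact absurd (hsame (s + (k₀ + 0)) (s + (k₀ + 6 * p)) i i' hi hi'
            (by omega) (by omega) (by omega) (by omega) (by omega) h) (by simp)
        · exact h
        · exfalso
          have := off_mono n X (show i' + 1 ≤ i from h)
          omega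
      subst hii'
      have hsucc := off_succ n X i hi
      set c₀ := s + k₀ - off n X i - 6 with hc₀
      set Li := (X ⟨i, hi⟩).length with hLi
      have hc6 : c₀ + 6 * p < Li := by omega
      -- X i is p-periodic on [c₀, c₀ + 6p]
      have hXY : ∀ e, e ≤ 6 * p → (X ⟨i, hi⟩)[c₀ + e]? = Y[(k₀ + e) % p]? := by
        intro e he
        have e1 : (Wd n X)[off n X i + (6 + (c₀ + e))]? = (X ⟨i, hi⟩)[c₀ + e]? := by
          rw [Wd_get n X i hi (6 + (c₀ + e)) (by omega), blk_X]
        rw [← e1, show off n X i + (6 + (c₀ + e)) = s + (k₀ + e) from by omega]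
        exact hget (k₀ + e) (by omega)
      set Z := ((X ⟨i, hi⟩).drop c₀).take p with hZ
      have hZlen : Z.length = p := by
        rw [hZ, List.length_take, List.length_drop]
        omega
      have hZne : Z ≠ [] := by
        intro h
        rw [h] at hZlen
        simp at hZlen
        omega
      have hpow : wpow Z 6 = ((X ⟨i, hi⟩).drop c₀).take (6 * p) := by
        apply List.ext_getElem?
        intro e
        by_cases he : e < 6 * p
        · rw [wpow_getElem? Z 6 e (by rw [hZlen]; omega), hZlen]
          rw [List.getElem?_take, if_pos (Nat.mod_lt _ hp0), List.getElem?_drop]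
          rw [List.getElem?_take, if_pos he, List.getElem?_drop]
          rw [hXY (e % p) (by have := Nat.mod_lt e hp0; omega), hXY e (by omega)]
          congr 1
          rw [Nat.add_mod k₀ (e % p) p, Nat.mod_mod_of_dvd e (dvd_refl p), ← Nat.add_mod]
        · rw [List.getElem?_eq_none (by rw [wpow_length, hZlen]; omega),
            List.getElem?_eq_none (by rw [List.length_take, List.length_drop]; omega)]
      have hinf6 : wpow Z 6 <:+: X ⟨i, hi⟩ := by
        rw [hpow]
        exact (List.take_prefix _ _).isInfix.trans (List.drop_suffix _ _).isInfix
      exact hap ⟨i, hi⟩ Z hZne hinf6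
  · -- Case B : Y consists only of a's
    push_neg at hb
    have hall : ∀ k, k < p → Y[k]? = some aL := by
      intro k hk
      have h1 := hget k (by omega)
      rw [Nat.mod_eq_of_lt hk] at h1
      rcases Wd_letters n X hpos (s + k) (by omega) with h2 | h2
      · rw [h1] at h2; exact h2
      · rw [h1] at h2; exact absurd h2 (hb k hk)
    have ha6' : ∀ t0 : ℕ, t0 ≤ 1 → ∃ i, ∃ hi : i < n, s + t0 = off n X i := by
      intro t0 ht0
      apply a6_at n X hap hhead hlast (s + t0) (by omega)
      intro k hk
      rw [show s + t0 + k = s + (t0 + k) from by omega, hget (t0 + k) (by omega)]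
      exact hall _ (Nat.mod_lt _ hp0)
    obtain ⟨i, hi, hieq⟩ := ha6' 0 (by omega)
    obtain ⟨i', hi', hieq'⟩ := ha6' 1 (by omega)
    have hii : i < i' := off_lt_of_lt n X _ _ (by omega)
    have h1 := off_mono n X (show i + 1 ≤ i' from hii)
    have h2 := off_succ n X i hi
    omega

end Olshanskii
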